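/- Suppose Γ is an E-complete maximally tableau FOLP_CS-consistent set of closed Par-formulas. If ¬(s·t):_X B ∈ Γ, then for every formula A with Par(A) ⊆ X, either ¬s:_X(A→B) ∈ Γ or ¬t:_X A ∈ Γ. -/

import Mathlib

open scoped Classical

/-- Justification terms of FOLP, built from justification variables `jvar i`,
justification constants `jconst i`, and the operations `+`, `·`, `!`, `genₓ`. -/
inductive Tm : Type
  | jvar : ℕ → Tm
  | jconst : ℕ → Tm
  | plus : Tm → Tm → Tm
  | app : Tm → Tm → Tm
  | bang : Tm → Tm
  | gen : ℕ → Tm → Tm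
  deriving DecidableEq

/-- FOLP formulas with extra individual constants from `K` (`K`-formulas).
Individual variables are natural numbers; an argument `Sum.inl x` is an individual
variable, `Sum.inr a` is an element of `K`.  Predicate symbols are indexed by `ℕ`.
Plain FOLP formulas are `Fm Empty`, Par-formulas are `Fm ℕ` (the parameters being a
separate copy of ℕ, namely the `Sum.inr` part), and `D`-formulas are `Fm D`.
`just t X A` is the justification assertion `t :_X A`. -/
inductive Fm (K : Type) : Type
  | pred : ℕ → List (ℕ ⊕ K) → Fm K
  | neg : Fm K → Fm K
  | imp : Fm K → Fm K → Fm K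
  | all : ℕ → Fm K → Fm K
  | ex : ℕ → Fm K → Fm K
  | just : Tm → Finset (ℕ ⊕ K) → Fm K → Fm K

namespace Fm

variable {K K' : Type}

/-- Free individual variables of a `K`-formula.  Recall that
`FVar (t :_X A) = X` (more precisely, the individual-variable part of `X`). -/
noncomputable def fvar : Fm K → Finset ℕ
  | pred _ args => (args.filterMap Sum.getLeft?).toFinset
  | neg A => A.fvar
  | imp A B => A.fvar ∪ B.fvar
  | all x A => A.fvar.erase x
  | ex x A => A.fvar.erase x
  | just _ X _ => (X.toList.filterMap Sum.getLeft?).toFinset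

/-- The elements of `K` occurring in a `K`-formula (for `K = Par` this is `Par(A)`,
for `K = D` this is `D(A)`). -/
noncomputable def kocc : Fm K → Finset K
  | pred _ args => (args.filterMap Sum.getRight?).toFinset
  | neg A => A.kocc
  | imp A B => A.kocc ∪ B.kocc
  | all _ A => A.kocc
  | ex _ A => A.kocc
  | just _ X A => A.kocc ∪ (X.toList.filterMap Sum.getRight?).toFinset

/-- A `K`-formula is closed if it contains no free occurrences of individual variables. -/
def Closed (A : Fm K) : Prop := A.fvar = ∅

/-- Action of a partial substitution (of elements of `K` for individual variables)
on variables/`K`-elements. -/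
def subK (σ : ℕ → Option K) : ℕ ⊕ K → ℕ ⊕ K
  | .inl x => (σ x).elim (.inl x) .inr
  | .inr a => .inr a

/-- Simultaneous substitution of elements of `K` for free individual variables.
In `t :_X A` only the variables belonging to `X` are free, so only those get
substituted (both inside `X` and inside `A`). -/
noncomputable def msubst (σ : ℕ → Option K) : Fm K → Fm K
  | pred Q args => pred Q (args.map (subK σ))
  | neg A => neg (A.msubst σ)
  | imp A B => imp (A.msubst σ) (B.msubst σ)
  | all x A => all x (A.msubst fun y => if y = x then none else σ y)
  | ex x A => ex x (A.msubst fun y => if y = x then none else σ y)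
  | just t X A =>
      just t (X.image (subK σ)) (A.msubst fun y => if Sum.inl y ∈ X then σ y else none)

/-- `A.subst1 x a` is `A(a)`, i.e. `A{x/a}`: the result of replacing all free
occurrences of the individual variable `x` by the element `a : K`. -/
noncomputable def subst1 (x : ℕ) (a : K) (A : Fm K) : Fm K :=
  A.msubst fun y => if y = x then some a else none

/-- Action of a variable-for-variable substitution on arguments. -/
def subVV (x y : ℕ) : ℕ ⊕ K → ℕ ⊕ K
  | .inl z => if z = x then .inl y else .inl z
  | .inr a => .inr a

/-- `A.vsubst x y` is `A{x/y}`: substitution of the individual variable `y` for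
the free occurrences of the individual variable `x`. -/
noncomputable def vsubst (x y : ℕ) : Fm K → Fm K
  | pred Q args => pred Q (args.map (subVV x y))
  | neg A => neg (A.vsubst x y)
  | imp A B => imp (A.vsubst x y) (B.vsubst x y)
  | all z A => if z = x then all z A else all z (A.vsubst x y)
  | ex z A => if z = x then ex z A else ex z (A.vsubst x y)
  | just t X A =>
      if Sum.inl x ∈ X then just t (X.image (subVV x y)) (A.vsubst x y) else just t X A

/-- `FreeFor y x A`: the variable `y` is substitutable for the variable `x` in `A`
(no free occurrence of `x` lies in the scope of a quantifier binding `y`). -/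
def FreeFor (y x : ℕ) : Fm K → Prop
  | pred _ _ => True
  | neg A => FreeFor y x A
  | imp A B => FreeFor y x A ∧ FreeFor y x B
  | all z A => x = z ∨ x ∉ A.fvar ∨ (y ≠ z ∧ FreeFor y x A)
  | ex z A => x = z ∨ x ∉ A.fvar ∨ (y ≠ z ∧ FreeFor y x A)
  | just _ X A => Sum.inl x ∈ X → FreeFor y x A

/-- Action of a renaming on arguments. -/
def subR (σ : ℕ → ℕ) : ℕ ⊕ K → ℕ ⊕ K
  | .inl x => .inl (σ x)
  | .inr a => .inr a

/-- Renaming of all (free and bound) individual variables. -/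
noncomputable def rename (σ : ℕ → ℕ) : Fm K → Fm K
  | pred Q args => pred Q (args.map (subR σ))
  | neg A => neg (A.rename σ)
  | imp A B => imp (A.rename σ) (B.rename σ)
  | all x A => all (σ x) (A.rename σ)
  | ex x A => ex (σ x) (A.rename σ)
  | just t X A => just t (X.image (subR σ)) (A.rename σ)

/-- Mapping the extra individual constants of a `K`-formula along `f : K → K'`. -/
noncomputable def kmap (f : K → K') : Fm K → Fm K'
  | pred Q args => pred Q (args.map (Sum.map id f))
  | neg A => neg (A.kmap f)
  | imp A B => imp (A.kmap f) (B.kmap f)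
  | all x A => all x (A.kmap f)
  | ex x A => ex x (A.kmap f)
  | just t X A => just t (X.image (Sum.map id f)) (A.kmap f)

/-- A size measure used for the well-founded recursion defining truth. -/
noncomputable def size : Fm K → ℕ
  | pred _ _ => 0
  | neg A => A.size + 1
  | imp A B => A.size + B.size + 1
  | all _ A => A.size + 1
  | ex _ A => A.size + 1
  | just _ _ A => A.size + A.fvar.card + 1


theorem fvar_msubst_subset (σ : ℕ → Option K) (A : Fm K) :
    (A.msubst σ).fvar ⊆ A.fvar := by
  induction A generalizing σ with
  | pred Q args =>
      intro y hy
      simp only [msubst, fvar, List.mem_toFinset, List.mem_filterMap, List.mem_map] at hy ⊢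
      obtain ⟨s, ⟨a, ha, rfl⟩, hget⟩ := hy
      cases a with
      | inl z =>
          cases hσ : σ z with
          | none =>
              simp [subK, hσ] at hget
              exact ⟨Sum.inl z, ha, by simp [hget]⟩
          | some b => simp [subK, hσ] at hget
      | inr b => simp [subK] at hget
  | neg A ih => exact ih σ
  | imp A B ihA ihB =>
      simp only [msubst, fvar]
      exact Finset.union_subset_union (ihA σ) (ihB σ)
  | all x A ih =>
      simp only [msubst, fvar]
      exact Finset.erase_subset_erase x (ih _)
  | ex x A ih =>
      simp only [msubst, fvar]
      exact Finset.erase_subset_erase x (ih _)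
  | just t X A ih =>
      intro y hy
      simp only [msubst, fvar, List.mem_toFinset, List.mem_filterMap,
        Finset.mem_toList, Finset.mem_image] at hy ⊢
      obtain ⟨s, ⟨a, ha, rfl⟩, hget⟩ := hy
      cases a with
      | inl z =>
          cases hσ : σ z with
          | none =>
              refine ⟨Sum.inl z, ha, ?_⟩
              simp only [subK, hσ, Option.elim] at hget
              simpa using hget
          | some b => simp [subK, hσ] at hget
      | inr b => simp [subK] at hget

theorem size_msubst_le (σ : ℕ → Option K) (A : Fm K) :
    (A.msubst σ).size ≤ A.size := by
  induction A generalizing σ with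
  | pred Q args => simp [msubst, size]
  | neg A ih => simpa [msubst, size] using ih σ
  | imp A B ihA ihB =>
      simp only [msubst, size]
      have := ihA σ; have := ihB σ; omega
  | all x A ih => simpa [msubst, size] using ih _
  | ex x A ih => simpa [msubst, size] using ih _
  | just t X A ih =>
      simp only [msubst, size]
      have h1 := ih (fun y => if Sum.inl y ∈ X then σ y else none)
      have h2 := Finset.card_le_card
        (fvar_msubst_subset (fun y => if Sum.inl y ∈ X then σ y else none) A)
      omega

theorem size_subst1_le (x : ℕ) (a : K) (A : Fm K) : (A.subst1 x a).size ≤ A.size :=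
  size_msubst_le _ A


/-- `∀A`, the universal closure of `A`. -/
noncomputable def univClosure (A : Fm K) : Fm K :=
  (A.fvar.sort (· ≤ ·)).foldr Fm.all A

theorem size_foldr_all (l : List ℕ) (A : Fm K) :
    (l.foldr Fm.all A).size = A.size + l.length := by
  induction l with
  | nil => simp
  | cons z l ih => simp only [List.foldr, size, ih, List.length_cons]; omega

theorem size_univClosure (A : Fm K) :
    A.univClosure.size = A.size + A.fvar.card := by
  simp [univClosure, size_foldr_all, Finset.length_sort]

end Fm

/-- Embedding plain FOLP formulas into `K`-formulas. -/
noncomputable def toK {K : Type} : Fm Empty → Fm K := Fm.kmap (fun a => a.elim)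

/-- Two FOLP formulas are variable variants if each can be turned into the other
by a renaming of free and bound individual variables. -/
def VariableVariant (A B : Fm Empty) : Prop := ∃ σ : Equiv.Perm ℕ, B = A.rename σ

/-- The axioms of FOLP: a complete list of first order axiom schemes together
with the justification axiom schemes Ctr, Exp, Sum, jK, jT, j4, Gen. -/
inductive FOLPAxiom : Fm Empty → Prop
  | p1 (A B : Fm Empty) : FOLPAxiom (A.imp (B.imp A))
  | p2 (A B C : Fm Empty) : FOLPAxiom ((A.imp (B.imp C)).imp ((A.imp B).imp (A.imp C)))
  | p3 (A B : Fm Empty) : FOLPAxiom (((A.neg).imp (B.neg)).imp (B.imp A))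
  | allElim (x y : ℕ) (A : Fm Empty) : Fm.FreeFor y x A → FOLPAxiom ((Fm.all x A).imp (A.vsubst x y))
  | allImp (x : ℕ) (A B : Fm Empty) : x ∉ A.fvar →
      FOLPAxiom ((Fm.all x (A.imp B)).imp (A.imp (Fm.all x B)))
  | exIntro (x y : ℕ) (A : Fm Empty) : Fm.FreeFor y x A → FOLPAxiom ((A.vsubst x y).imp (Fm.ex x A))
  | exElim (x : ℕ) (A B : Fm Empty) : x ∉ B.fvar →
      FOLPAxiom ((Fm.all x (A.imp B)).imp ((Fm.ex x A).imp B))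
  | ctr (t : Tm) (X : Finset (ℕ ⊕ Empty)) (A : Fm Empty) (y : ℕ) : Sum.inl y ∉ X → y ∉ A.fvar →
      FOLPAxiom ((Fm.just t (insert (Sum.inl y) X) A).imp (Fm.just t X A))
  | exp (t : Tm) (X : Finset (ℕ ⊕ Empty)) (A : Fm Empty) (y : ℕ) : Sum.inl y ∉ X →
      FOLPAxiom ((Fm.just t X A).imp (Fm.just t (insert (Sum.inl y) X) A))
  | sum1 (s t : Tm) (X : Finset (ℕ ⊕ Empty)) (A : Fm Empty) : FOLPAxiom ((Fm.just s X A).imp (Fm.just (Tm.plus s t) X A))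
  | sum2 (s t : Tm) (X : Finset (ℕ ⊕ Empty)) (A : Fm Empty) : FOLPAxiom ((Fm.just s X A).imp (Fm.just (Tm.plus t s) X A))
  | jK (s t : Tm) (X : Finset (ℕ ⊕ Empty)) (A B : Fm Empty) : FOLPAxiom ((Fm.just s X (A.imp B)).imp
      ((Fm.just t X A).imp (Fm.just (Tm.app s t) X B)))
  | jT (t : Tm) (X : Finset (ℕ ⊕ Empty)) (A : Fm Empty) : FOLPAxiom ((Fm.just t X A).imp A)
  | j4 (t : Tm) (X : Finset (ℕ ⊕ Empty)) (A : Fm Empty) : FOLPAxiom ((Fm.just t X A).imp (Fm.just (Tm.bang t) X (Fm.just t X A)))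
  | gen (t : Tm) (X : Finset (ℕ ⊕ Empty)) (A : Fm Empty) (x : ℕ) : Sum.inl x ∉ X →
      FOLPAxiom ((Fm.just t X A).imp (Fm.just (Tm.gen x t) X (Fm.all x A)))

/-- A constant specification is a set of pairs `(c, A)`, read `c : A`
(that is, `c :_∅ A`), where `A` is an axiom instance. -/
def ConstantSpec (CS : Set (ℕ × Fm Empty)) : Prop := ∀ p ∈ CS, FOLPAxiom p.2

/-- `CS` is axiomatically appropriate: every axiom instance has a constant justifying it. -/
def AxiomaticallyAppropriate (CS : Set (ℕ × Fm Empty)) : Prop :=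
  ∀ A, FOLPAxiom A → ∃ c, (c, A) ∈ CS

/-- `CS` is variant closed. -/
def VariantClosed (CS : Set (ℕ × Fm Empty)) : Prop :=
  ∀ c A B, VariableVariant A B → ((c, A) ∈ CS ↔ (c, B) ∈ CS)

/-- Derivability in the axiomatic system `FOLP_CS`:  axioms, axiom necessitation
restricted to `CS`, modus ponens, and universal generalization. -/
inductive Deriv (CS : Set (ℕ × Fm Empty)) : Fm Empty → Prop
  | ax {A : Fm Empty} : FOLPAxiom A → Deriv CS A
  | an {c : ℕ} {A : Fm Empty} : (c, A) ∈ CS → Deriv CS (Fm.just (Tm.jconst c) ∅ A)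
  | mp {A B : Fm Empty} : Deriv CS (A.imp B) → Deriv CS A → Deriv CS B
  | ug {A : Fm Empty} (x : ℕ) : Deriv CS A → Deriv CS (Fm.all x A)

/-- A Mkrtychev model of `FOLP_CS` with domain `D`:  an interpretation `I` of the
predicate symbols and an admissible evidence function `E` satisfying E1–E6. -/
structure MModel (CS : Set (ℕ × Fm Empty)) (D : Type) : Type where
  dom_nonempty : Nonempty D
  I : ℕ → Set (List D)
  E : Tm → Set (Fm D)
  e1 : ∀ c A, (c, A) ∈ CS → toK A ∈ E (Tm.jconst c)
  e2 : ∀ s t (A B : Fm D), Fm.imp A B ∈ E s → A ∈ E t → B ∈ E (Tm.app s t)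
  e3 : ∀ s t, E s ∪ E t ⊆ E (Tm.plus s t)
  e4 : ∀ t (A : Fm D) (X : Finset D), A ∈ E t → A.kocc ⊆ X →
      Fm.just t (X.image Sum.inr) A ∈ E (Tm.bang t)
  e5 : ∀ t (x : ℕ) (A : Fm D), A ∈ E t → Fm.all x A ∈ E (Tm.gen x t)
  e6 : ∀ t (A : Fm D) (x : ℕ) (a : D), A ∈ E t → A.subst1 x a ∈ E t

/-- Truth of a (closed) `D`-formula in a Mkrtychev model. -/
noncomputable def MModel.Sat {CS : Set (ℕ × Fm Empty)} {D : Type} (M : MModel CS D) :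
    Fm D → Prop
  | .pred Q args => ∃ as : List D, args = as.map Sum.inr ∧ as ∈ M.I Q
  | .neg A => ¬ M.Sat A
  | .imp A B => M.Sat A → M.Sat B
  | .all x A => ∀ a : D, M.Sat (A.subst1 x a)
  | .ex x A => ∃ a : D, M.Sat (A.subst1 x a)
  | .just t _ A => A ∈ M.E t ∧ M.Sat A.univClosure
  termination_by F => F.size
  decreasing_by
    all_goals simp only [Fm.size, Fm.size_univClosure]
    all_goals first
      | omega
      | exact Nat.lt_succ_of_le (Fm.size_subst1_le _ _ _)

/-- Truth of an FOLP sentence in a Mkrtychev model. -/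
noncomputable def MModel.SatSentence {CS : Set (ℕ × Fm Empty)} {D : Type}
    (M : MModel CS D) (F : Fm Empty) : Prop := M.Sat (toK F)

/-- A sentence is `FOLP_CS`-valid if it is true in every Mkrtychev model of `FOLP_CS`. -/
def FOLPValid (CS : Set (ℕ × Fm Empty)) (F : Fm Empty) : Prop :=
  ∀ (D : Type) (M : MModel CS D), M.SatSentence F

/-- Satisfiability of a closed Par-formula `A(u₁,…,uₙ)` in a model:
`M ⊩ A(a₁,…,aₙ)` for some `a₁,…,aₙ ∈ D`. -/
noncomputable def MModel.SatPar {CS : Set (ℕ × Fm Empty)} {D : Type}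
    (M : MModel CS D) (F : Fm ℕ) : Prop :=
  ∃ g : ℕ → D, M.Sat (F.kmap g)

/-- `X ⊆ Par`: the set `X` consists of parameters only. -/
def XPar (X : Finset (ℕ ⊕ ℕ)) : Prop := ∀ s ∈ X, ∃ u : ℕ, s = Sum.inr u

/-- One application of an FOLP tableau rule to a branch (represented by the set `S`
of closed Par-formulas occurring on it), producing the list of extended branches
(one branch for a non-branching rule, two for a branching rule). -/
inductive TabRule : Set (Fm ℕ) → List (Set (Fm ℕ)) → Prop
  | fneg {S A} : Fm.neg (Fm.neg A) ∈ S → TabRule S [insert A S]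
  | timp {S A B} : Fm.imp A B ∈ S → TabRule S [insert (Fm.neg A) S, insert B S]
  | fimp {S A B} : Fm.neg (Fm.imp A B) ∈ S → TabRule S [insert A (insert (Fm.neg B) S)]
  | tall {S x A} (u : ℕ) : Fm.all x A ∈ S → TabRule S [insert (A.subst1 x u) S]
  | fex {S x A} (u : ℕ) : Fm.neg (Fm.ex x A) ∈ S →
      TabRule S [insert (Fm.neg (A.subst1 x u)) S]
  | tex {S x A} (u : ℕ) : Fm.ex x A ∈ S → (∀ F ∈ S, u ∉ F.kocc) →
      TabRule S [insert (A.subst1 x u) S]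
  | fall {S x A} (u : ℕ) : Fm.neg (Fm.all x A) ∈ S → (∀ F ∈ S, u ∉ F.kocc) →
      TabRule S [insert (Fm.neg (A.subst1 x u)) S]
  | tcolon {S t X A} : Fm.just t X A ∈ S → XPar X → TabRule S [insert A.univClosure S]
  | fplus {S t s X A} : Fm.neg (Fm.just (Tm.plus t s) X A) ∈ S → XPar X →
      TabRule S [insert (Fm.neg (Fm.just t X A)) (insert (Fm.neg (Fm.just s X A)) S)]
  | fapp {S s t X B} (A : Fm ℕ) : Fm.neg (Fm.just (Tm.app s t) X B) ∈ S → XPar X →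
      (∀ u ∈ A.kocc, Sum.inr u ∈ X) →
      TabRule S [insert (Fm.neg (Fm.just s X (A.imp B))) S,
                 insert (Fm.neg (Fm.just t X A)) S]
  | fbang {S t X A} : Fm.neg (Fm.just (Tm.bang t) X (Fm.just t X A)) ∈ S → XPar X →
      TabRule S [insert (Fm.neg (Fm.just t X A)) S]
  | ctr {S t X A} (u : ℕ) : Fm.neg (Fm.just t X A) ∈ S → XPar X → Sum.inr u ∉ X →
      TabRule S [insert (Fm.neg (Fm.just t (insert (Sum.inr u) X) A)) S]
  | exp {S t X A} (u : ℕ) : Fm.neg (Fm.just t (insert (Sum.inr u) X) A) ∈ S →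
      XPar X → Sum.inr u ∉ X → u ∉ A.kocc →
      TabRule S [insert (Fm.neg (Fm.just t X A)) S]
  | ins {S t X A} (x u : ℕ) : Fm.neg (Fm.just t X (A.subst1 x u)) ∈ S → XPar X →
      TabRule S [insert (Fm.neg (Fm.just t X A)) S]
  | genx {S t X A x} : Fm.neg (Fm.just (Tm.gen x t) X (Fm.all x A)) ∈ S → XPar X →
      TabRule S [insert (Fm.neg (Fm.just t X A)) S]

/-- `ClosedTableau CS S`: there is a closed `FOLP_CS`-tableau beginning with the
formulas of `S`.  A branch closes if it contains both `A` and `¬A`, or contains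
`¬c:A` with `c:A ∈ CS`. -/
inductive ClosedTableau (CS : Set (ℕ × Fm Empty)) : Set (Fm ℕ) → Prop
  | close {S A} : A ∈ S → Fm.neg A ∈ S → ClosedTableau CS S
  | closeCS {S c A} : (c, A) ∈ CS →
      Fm.neg (Fm.just (Tm.jconst c) ∅ (toK A)) ∈ S → ClosedTableau CS S
  | step {S l} : TabRule S l → (∀ S' ∈ l, ClosedTableau CS S') → ClosedTableau CS S

/-- An `FOLP_CS`-tableau proof of the sentence `F`: a closed tableau beginning
with `¬F`. -/
def TabProof (CS : Set (ℕ × Fm Empty)) (F : Fm Empty) : Prop :=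
  ClosedTableau CS {Fm.neg (toK F)}

/-- A set of closed Par-formulas is tableau `FOLP_CS`-consistent if no finite
subset of it has a closed `FOLP_CS`-tableau. -/
def TabConsistent (CS : Set (ℕ × Fm Empty)) (Γ : Set (Fm ℕ)) : Prop :=
  ∀ S : Set (Fm ℕ), S ⊆ Γ → S.Finite → ¬ ClosedTableau CS S

/-- `Γ` is maximal: it has no proper tableau consistent extension by closed Par-formulas. -/
def MaximalCons (CS : Set (ℕ × Fm Empty)) (Γ : Set (Fm ℕ)) : Prop :=
  TabConsistent CS Γ ∧
    ∀ Δ : Set (Fm ℕ), Γ ⊆ Δ → (∀ F ∈ Δ, F.Closed) → TabConsistent CS Δ → Δ = Γ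

/-- `Γ` is E-complete (with parameters as witnesses). -/
def EComplete (Γ : Set (Fm ℕ)) : Prop :=
  (∀ (x : ℕ) (A : Fm ℕ), Fm.ex x A ∈ Γ → ∃ u : ℕ, A.subst1 x u ∈ Γ) ∧
  (∀ (x : ℕ) (A : Fm ℕ), Fm.neg (Fm.all x A) ∈ Γ → ∃ u : ℕ, Fm.neg (A.subst1 x u) ∈ Γ)

/-- The interpretation of the canonical model determined by `Γ`:
`I(Q) = { (u₁,…,uₙ) | Q(u₁,…,uₙ) ∈ Γ }`. -/
def canI (Γ : Set (Fm ℕ)) (Q : ℕ) : Set (List ℕ) :=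
  {us | Fm.pred Q (us.map Sum.inr) ∈ Γ}

/-- The evidence function of the canonical model determined by `Γ`:
`E(t) = { A | ¬ t:_{Par(A)} A ∉ Γ }`. -/
def canE (Γ : Set (Fm ℕ)) (t : Tm) : Set (Fm ℕ) :=
  {A | Fm.neg (Fm.just t (A.kocc.image Sum.inr) A) ∉ Γ}

/-!
Suppose neither `¬s:_X(A→B)` nor `¬t:_X A` lies in `Γ`. By maximality each of them, together
with some finite `Sᵢ ⊆ Γ`, has a closed tableau. Applying (F·) to `¬(s·t):_X B` and continuing
on each branch with the corresponding closed tableau closes `{¬(s·t):_X B} ∪ S₁ ∪ S₂ ⊆ Γ`,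
contradicting consistency.

The continuation needs weakening of closed tableaux, which is not immediate: (T∃) and (F∀)
introduce a parameter fresh for the whole branch, and it may occur in the larger branch.
So weakening is proved together with renaming of parameters by a permutation, switching at
each such rule to a parameter fresh for the larger branch.
-/

namespace Fm

variable {K K' K'' : Type}

@[simp] theorem kmap_neg (f : K → K') (A : Fm K) : (neg A).kmap f = neg (A.kmap f) := rfl

@[simp] theorem kmap_imp (f : K → K') (A B : Fm K) :
    (imp A B).kmap f = imp (A.kmap f) (B.kmap f) := rfl

@[simp] theorem kmap_all (f : K → K') (x : ℕ) (A : Fm K) : (all x A).kmap f = all x (A.kmap f) :=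
  rfl

@[simp] theorem kmap_ex (f : K → K') (x : ℕ) (A : Fm K) : (ex x A).kmap f = ex x (A.kmap f) :=
  rfl

/-- `kmap` was elaborated with classical decidable equality on `ℕ ⊕ K'`; this form uses the
ambient instance, as the tableau rules do. -/
@[simp] theorem kmap_just [DecidableEq K'] (f : K → K') (t : Tm) (X : Finset (ℕ ⊕ K))
    (A : Fm K) : (just t X A).kmap f = just t (X.image (Sum.map id f)) (A.kmap f) := by
  simp only [kmap]
  congr!

theorem kocc_kmap [DecidableEq K'] (f : K → K') (A : Fm K) :
    (A.kmap f).kocc = A.kocc.image f := by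
  induction A with
  | pred Q args => ext; simp [kmap, kocc]
  | neg A ih => simpa [kocc] using ih
  | imp A B ihA ihB => ext; simp [kocc, ihA, ihB, or_and_right, exists_or]
  | all x A ih => simpa [kocc] using ih
  | ex x A ih => simpa [kocc] using ih
  | just t X A ih => ext; simp [kocc, ih, or_and_right, exists_or]

theorem fvar_kmap (f : K → K') (A : Fm K) : (A.kmap f).fvar = A.fvar := by
  induction A with
  | pred Q args => ext; simp [kmap, fvar]
  | neg A ih => simpa [fvar] using ih
  | imp A B ihA ihB => simp [fvar, ihA, ihB]
  | all x A ih => simp [fvar, ih]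
  | ex x A ih => simp [fvar, ih]
  | just t X A ih => ext; simp [kmap, fvar]

theorem kmap_congr {f g : K → K'} {A : Fm K} (h : ∀ a ∈ A.kocc, f a = g a) :
    A.kmap f = A.kmap g := by
  induction A with
  | pred Q args =>
    simp only [kmap, pred.injEq, true_and]
    refine List.map_congr_left fun
      | .inl _, _ => rfl
      | .inr a, ha => by simp [h a (by simpa [kocc] using ha)]
  | neg A ih => simpa using ih h
  | imp A B ihA ihB =>
    simp only [kocc, Finset.mem_union] at h
    simp [ihA fun a ha => h a (.inl ha), ihB fun a ha => h a (.inr ha)]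
  | all x A ih => simpa using ih h
  | ex x A ih => simpa using ih h
  | just t X A ih =>
    simp only [kocc, Finset.mem_union] at h
    simp only [kmap, just.injEq, true_and, ih fun a ha => h a (.inl ha), and_true]
    refine Finset.image_congr fun
      | .inl _, _ => rfl
      | .inr a, ha => by simp [h a (.inr (by simpa using ha))]

theorem kmap_kmap (f : K → K') (g : K' → K'') (A : Fm K) :
    (A.kmap f).kmap g = A.kmap (g ∘ f) := by
  induction A with
  | pred Q args => simp [kmap]
  | neg A ih => simp [ih]
  | imp A B ihA ihB => simp [ihA, ihB]
  | all x A ih => simp [ih]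
  | ex x A ih => simp [ih]
  | just t X A ih => simp [kmap, ih, Finset.image_image]

theorem kmap_id (A : Fm K) : A.kmap id = A := by
  induction A with
  | pred Q args => simp [kmap]
  | neg A ih => simp [ih]
  | imp A B ihA ihB => simp [ihA, ihB]
  | all x A ih => simp [ih]
  | ex x A ih => simp [ih]
  | just t X A ih => simp [kmap, ih]

theorem sumMap_subK (f : K → K') (σ : ℕ → Option K) (s : ℕ ⊕ K) :
    Sum.map id f (subK σ s) = subK (fun y => (σ y).map f) (Sum.map id f s) := by
  rcases s with x | a
  · cases h : σ x <;> simp [subK, h]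
  · rfl

theorem kmap_msubst (f : K → K') (A : Fm K) (σ : ℕ → Option K) :
    (A.msubst σ).kmap f = (A.kmap f).msubst fun y => (σ y).map f := by
  induction A generalizing σ with
  | pred Q args =>
    simp only [msubst, kmap, List.map_map, pred.injEq, true_and]
    exact List.map_congr_left fun s _ => sumMap_subK f σ s
  | neg A ih => simp [msubst, ih]
  | imp A B ihA ihB => simp [msubst, ihA, ihB]
  | all x A ih => simp [msubst, ih, apply_ite (Option.map f)]
  | ex x A ih => simp [msubst, ih, apply_ite (Option.map f)]
  | just t X A ih =>
    simp only [msubst, kmap, ih, Finset.image_image, just.injEq, true_and]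
    constructor
    · exact Finset.image_congr fun s _ => sumMap_subK f σ s
    · congr 1
      funext y
      by_cases hy : Sum.inl y ∈ X <;> simp [hy]

theorem kmap_subst1 (f : K → K') (x : ℕ) (a : K) (A : Fm K) :
    (A.subst1 x a).kmap f = (A.kmap f).subst1 x (f a) := by
  simp [subst1, kmap_msubst, apply_ite (Option.map f)]

theorem kmap_univClosure (f : K → K') (A : Fm K) :
    A.univClosure.kmap f = (A.kmap f).univClosure := by
  rw [univClosure, univClosure, fvar_kmap]
  induction A.fvar.sort (· ≤ ·) with
  | nil => rfl
  | cons x l ih => simp [ih]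

theorem kmap_toK (f : K → K') (A : Fm Empty) : (toK A : Fm K).kmap f = toK A := by
  rw [toK, kmap_kmap]
  exact congrArg (kmap · A) (funext fun a => a.elim)

theorem closed_neg_just_iff {t : Tm} {X : Finset (ℕ ⊕ ℕ)} {A : Fm ℕ} :
    (neg (just t X A)).Closed ↔ XPar X := by
  simp [Closed, fvar, XPar, Finset.eq_empty_iff_forall_notMem]

end Fm

theorem XPar.image {X : Finset (ℕ ⊕ ℕ)} (hX : XPar X) (f : ℕ → ℕ) :
    XPar (X.image (Sum.map id f)) := by
  simp only [XPar, Finset.mem_image, forall_exists_index, and_imp, forall_apply_eq_imp_iff₂]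
  intro s hs
  obtain ⟨u, rfl⟩ := hX s hs
  exact ⟨f u, rfl⟩

theorem Set.Finite.exists_fresh {S : Set (Fm ℕ)} (hS : S.Finite) :
    ∃ u : ℕ, ∀ F ∈ S, u ∉ F.kocc := by
  obtain ⟨u, hu⟩ := (hS.biUnion fun F _ => F.kocc.finite_toSet).infinite_compl.nonempty
  exact ⟨u, fun F hF hmem => hu (Set.mem_biUnion hF hmem)⟩

section Renaming

variable {f : Equiv.Perm ℕ} {u v : ℕ}

theorem Fm.kmap_trans_swap {F : Fm ℕ} (hu : u ∉ F.kocc) (hv : v ∉ (F.kmap f).kocc) :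
    F.kmap (f.trans (Equiv.swap (f u) v)) = F.kmap f := by
  refine Fm.kmap_congr fun a ha => Equiv.swap_apply_of_ne_of_ne ?_ ?_
  · exact fun h => hu (f.injective h ▸ ha)
  · rintro rfl
    exact hv (Fm.kocc_kmap f F ▸ Finset.mem_image_of_mem f ha)

theorem Fm.kmap_trans_swap_subst1 {A : Fm ℕ} (x : ℕ) (hu : u ∉ A.kocc)
    (hv : v ∉ (A.kmap f).kocc) :
    (A.subst1 x u).kmap (f.trans (Equiv.swap (f u) v)) = (A.kmap f).subst1 x v := by
  rw [Fm.kmap_subst1, Fm.kmap_trans_swap hu hv]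
  simp

theorem image_kmap_trans_swap_subset {S S' : Set (Fm ℕ)} (hu : ∀ F ∈ S, u ∉ F.kocc)
    (hv : ∀ F ∈ S', v ∉ F.kocc) (hsub : Fm.kmap f '' S ⊆ S') :
    Fm.kmap (f.trans (Equiv.swap (f u) v)) '' S ⊆ S' := by
  rintro _ ⟨F, hF, rfl⟩
  rw [Fm.kmap_trans_swap (hu F hF) (hv _ (hsub ⟨F, hF, rfl⟩))]
  exact hsub ⟨F, hF, rfl⟩

end Renaming

theorem image_insert_subset_insert {f : Fm ℕ → Fm ℕ} {A A' : Fm ℕ} {S S' : Set (Fm ℕ)}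
    (hA : f A = A') (hsub : f '' S ⊆ S') : f '' insert A S ⊆ insert A' S' := by
  rw [Set.image_insert_eq, hA]
  exact Set.insert_subset_insert hsub

section Tableaux

variable {CS : Set (ℕ × Fm Empty)}

theorem ClosedTableau.step₁ {S T : Set (Fm ℕ)} (hr : TabRule S [T]) (hT : ClosedTableau CS T) :
    ClosedTableau CS S :=
  .step hr (by simpa using hT)

theorem ClosedTableau.step₂ {S T₁ T₂ : Set (Fm ℕ)} (hr : TabRule S [T₁, T₂])
    (h₁ : ClosedTableau CS T₁) (h₂ : ClosedTableau CS T₂) : ClosedTableau CS S :=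
  .step hr (by simp [h₁, h₂])

def RenamingClosed (CS : Set (ℕ × Fm Empty)) (S : Set (Fm ℕ)) : Prop :=
  ∀ (f : Equiv.Perm ℕ) (S' : Set (Fm ℕ)), S'.Finite → Fm.kmap f '' S ⊆ S' → ClosedTableau CS S'

theorem TabRule.renamingClosed {S : Set (Fm ℕ)} {l : List (Set (Fm ℕ))} (hr : TabRule S l)
    (ih : ∀ T ∈ l, RenamingClosed CS T) : RenamingClosed CS S := by
  intro f S' hS' hsub
  have mem : ∀ {F}, F ∈ S → F.kmap f ∈ S' := fun hF => hsub ⟨_, hF, rfl⟩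
  have branch : ∀ {A A'}, RenamingClosed CS (insert A S) → A.kmap f = A' →
      ClosedTableau CS (insert A' S') := fun h hA =>
    h f _ (hS'.insert _) (image_insert_subset_insert hA hsub)
  cases hr <;> simp only [List.mem_cons, List.not_mem_nil, or_false, forall_eq_or_imp,
    forall_eq] at ih
  case fneg hmem => exact .step₁ (.fneg (mem hmem)) (branch ih rfl)
  case timp hmem => exact .step₂ (.timp (mem hmem)) (branch ih.1 rfl) (branch ih.2 rfl)
  case fimp hmem =>
    exact .step₁ (.fimp (mem hmem)) (ih f _ ((hS'.insert _).insert _)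
      (image_insert_subset_insert rfl (image_insert_subset_insert rfl hsub)))
  case tall u hmem => exact .step₁ (.tall (f u) (mem hmem)) (branch ih (Fm.kmap_subst1 ..))
  case fex u hmem =>
    exact .step₁ (.fex (f u) (mem hmem)) (branch ih (by simp [Fm.kmap_subst1]))
  case tex x A u hmem hu =>
    obtain ⟨v, hv⟩ := hS'.exists_fresh
    exact .step₁ (.tex v (mem hmem) hv) (ih _ _ (hS'.insert _) (image_insert_subset_insert
      (Fm.kmap_trans_swap_subst1 x (hu (.ex x A) hmem) (hv (.ex x _) (mem hmem)))
      (image_kmap_trans_swap_subset hu hv hsub)))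
  case fall x A u hmem hu =>
    obtain ⟨v, hv⟩ := hS'.exists_fresh
    exact .step₁ (.fall v (mem hmem) hv) (ih _ _ (hS'.insert _) (image_insert_subset_insert
      (congrArg Fm.neg (Fm.kmap_trans_swap_subst1 x (hu (.neg (.all x A)) hmem)
        (hv (.neg (.all x _)) (mem hmem))))
      (image_kmap_trans_swap_subset hu hv hsub)))
  case tcolon hmem hX =>
    exact .step₁ (.tcolon (by simpa using mem hmem) (hX.image f))
      (branch ih (Fm.kmap_univClosure ..))
  case fplus hmem hX =>
    exact .step₁ (.fplus (by simpa using mem hmem) (hX.image f))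
      (ih f _ ((hS'.insert _).insert _)
        (image_insert_subset_insert (by simp) (image_insert_subset_insert (by simp) hsub)))
  case fapp A hmem hX hA =>
    refine .step₂ (.fapp (A.kmap f) (by simpa using mem hmem) (hX.image f) ?_)
      (branch ih.1 (by simp)) (branch ih.2 (by simp))
    intro w hw
    obtain ⟨a, ha, rfl⟩ := Finset.mem_image.1 (Fm.kocc_kmap f A ▸ hw)
    exact Finset.mem_image_of_mem _ (hA a ha)
  case fbang hmem hX =>
    exact .step₁ (.fbang (by simpa using mem hmem) (hX.image f)) (branch ih (by simp))
  case ctr u hmem hX hu =>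
    refine .step₁ (.ctr (f u) (by simpa using mem hmem) (hX.image f) ?_) (branch ih (by simp))
    simpa using hu
  case exp u hmem hX hu hu' =>
    refine .step₁ (.exp (f u) (by simpa using mem hmem) (hX.image f) (by simpa using hu) ?_)
      (branch ih (by simp))
    simpa [Fm.kocc_kmap] using hu'
  case ins x u hmem hX =>
    exact .step₁ (.ins x (f u) (by simpa [Fm.kmap_subst1] using mem hmem) (hX.image f))
      (branch ih (by simp))
  case genx hmem hX =>
    exact .step₁ (.genx (by simpa using mem hmem) (hX.image f)) (branch ih (by simp))

theorem ClosedTableau.renamingClosed {S : Set (Fm ℕ)} (h : ClosedTableau CS S) :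
    RenamingClosed CS S := by
  induction h with
  | close hA hnA => exact fun f S' _ hsub => .close (hsub ⟨_, hA, rfl⟩) (hsub ⟨_, hnA, rfl⟩)
  | closeCS hc hmem =>
    exact fun f S' _ hsub => .closeCS hc (by simpa [Fm.kmap_toK] using hsub ⟨_, hmem, rfl⟩)
  | step hr _ ih => exact hr.renamingClosed ih

theorem ClosedTableau.mono {S S' : Set (Fm ℕ)} (h : ClosedTableau CS S) (hsub : S ⊆ S')
    (hS' : S'.Finite) : ClosedTableau CS S' :=
  h.renamingClosed 1 S' hS' (by simpa [Fm.kmap_id] using hsub)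

theorem MaximalCons.exists_closedTableau_insert {Γ : Set (Fm ℕ)} (hmax : MaximalCons CS Γ)
    (hclosed : ∀ F ∈ Γ, F.Closed) {F : Fm ℕ} (hF : F.Closed) (hFΓ : F ∉ Γ) :
    ∃ S ⊆ Γ, S.Finite ∧ ClosedTableau CS (insert F S) := by
  have hinc : ¬ TabConsistent CS (insert F Γ) := fun hcons =>
    hFΓ (hmax.2 _ (Set.subset_insert F Γ) (Set.forall_mem_insert.2 ⟨hF, hclosed⟩) hcons ▸
      Set.mem_insert F Γ)
  simp only [TabConsistent, not_forall, not_not] at hinc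
  obtain ⟨S, hSΓ, hS, hT⟩ := hinc
  refine ⟨S \ {F}, by simpa [Set.sdiff_singleton_subset_iff] using hSΓ, hS.sdiff, ?_⟩
  exact hT.mono (by simp [Set.subset_insert]) (hS.sdiff.insert F)

end Tableaux

theorem mcs_closed_fapp_general
    (CS : Set (ℕ × Fm Empty))
    (Γ : Set (Fm ℕ)) (hclosed : ∀ F ∈ Γ, F.Closed)
    (hmax : MaximalCons CS Γ)
    (s t : Tm) (X : Finset (ℕ ⊕ ℕ)) (B : Fm ℕ)
    (h : Fm.neg (Fm.just (Tm.app s t) X B) ∈ Γ) :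
    ∀ A : Fm ℕ, (∀ u ∈ A.kocc, Sum.inr u ∈ X) →
      Fm.neg (Fm.just s X (A.imp B)) ∈ Γ ∨ Fm.neg (Fm.just t X A) ∈ Γ := by
  intro A hA
  by_contra! ⟨hs, ht⟩
  have hX : XPar X := Fm.closed_neg_just_iff.1 (hclosed _ h)
  obtain ⟨S₁, hS₁Γ, hS₁, hT₁⟩ :=
    hmax.exists_closedTableau_insert hclosed (Fm.closed_neg_just_iff.2 hX) hs
  obtain ⟨S₂, hS₂Γ, hS₂, hT₂⟩ :=
    hmax.exists_closedTableau_insert hclosed (Fm.closed_neg_just_iff.2 hX) ht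
  set S := insert (Fm.neg (Fm.just (Tm.app s t) X B)) (S₁ ∪ S₂)
  have hS : S.Finite := (hS₁.union hS₂).insert _
  refine hmax.1 S (Set.insert_subset h (Set.union_subset hS₁Γ hS₂Γ)) hS ?_
  exact .step₂ (.fapp A (Set.mem_insert _ _) hX hA)
    (hT₁.mono (Set.insert_subset_insert (Set.subset_union_left.trans (Set.subset_insert _ _)))
      (hS.insert _))
    (hT₂.mono (Set.insert_subset_insert (Set.subset_union_right.trans (Set.subset_insert _ _)))
      (hS.insert _))

/-- closure under (F·).  If `¬(s·t):_X B ∈ Γ` then for every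
formula `A` with `Par(A) ⊆ X`, either `¬s:_X(A→B) ∈ Γ` or `¬t:_X A ∈ Γ`. -/
theorem mcs_closed_fapp
    (CS : Set (ℕ × Fm Empty)) (hCS : ConstantSpec CS)
    (Γ : Set (Fm ℕ)) (hclosed : ∀ F ∈ Γ, F.Closed)
    (hmax : MaximalCons CS Γ) (hE : EComplete Γ)
    (s t : Tm) (X : Finset (ℕ ⊕ ℕ)) (B : Fm ℕ)
    (h : Fm.neg (Fm.just (Tm.app s t) X B) ∈ Γ) :
    ∀ A : Fm ℕ, (∀ u ∈ A.kocc, Sum.inr u ∈ X) →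
      Fm.neg (Fm.just s X (A.imp B)) ∈ Γ ∨ Fm.neg (Fm.just t X A) ∈ Γ :=
  mcs_closed_fapp_general CS Γ hclosed hmax s t X B h
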